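/- Let E ⊂ ℝ^d be compact, m a Borel measure on E, and t > 0, and suppose there exist C > 0 and r₀ > 0 such that m(B(x,r)) ≥ C·r^t for all x ∈ E and 0 < r < r₀. Then the notion of weak (t,l)-tangent plane is independent of the choice of such a measure: if V ∈ G(d,l) satisfies liminf_{r→0} m(B(a,r) \ V_a(δr))/r^t = 0 for all 0 < δ < 1 with respect to one such measure m, and m' is another Borel measure on E satisfying the same lower regularity bound, and in addition m' is absolutely bounded above by a constant times m on balls (m'(B(x,r)) ≤ C'·r^t), then V is also a weak (t,l)-tangent plane with respect to m'. -/

import Mathlib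

open Metric Set Filter MeasureTheory

abbrev Euc (d : ℕ) := EuclideanSpace ℝ (Fin d)

/-- Projection onto the orthogonal complement of `V`. -/
noncomputable def projQ {d : ℕ} (V : Submodule ℝ (Euc d)) : Euc d →L[ℝ] Euc d :=
  Vᗮ.subtypeL.comp (Submodule.orthogonalProjectionOnto Vᗮ)

/-- `V_a(δ)`: the `δ`-neighborhood of the affine plane `V + a`. -/
noncomputable def planeNbhd {d : ℕ} (a : Euc d) (V : Submodule ℝ (Euc d)) (δ : ℝ) :
    Set (Euc d) :=
  {x | ‖projQ V (x - a)‖ < δ}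

/-- `V` is a weak `(t,l)`-tangent plane for `E` at `a` with respect to `m`. -/
def IsWeakTangentPlane {d : ℕ} (m : Measure (Euc d)) (t : ℝ) (a : Euc d)
    (V : Submodule ℝ (Euc d)) : Prop :=
  ∀ δ : ℝ, 0 < δ → δ < 1 →
    Filter.liminf
      (fun r : ℝ => m (ball a r \ planeNbhd a V (δ * r)) / ENNReal.ofReal (r ^ t))
      (nhdsWithin 0 (Set.Ioi 0)) = 0

/-! If `V` is a weak tangent plane for `m`, then at arbitrarily small scales `r` the `m`-mass of
`B(a,r) \ V_a(δr/2)` is less than `C (δr/4)^t`, the least mass `m` gives a ball of radius `δr/4`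
centred on `E`. For `s = (1 - δ/4) r`, the ball of radius `δr/4` around any point of
`B(a,s) \ V_a(δs)` lies in `B(a,r) \ V_a(δr/2)`, so `E` misses `B(a,s) \ V_a(δs)`, and `m'`,
which lives on `E`, gives it mass zero. -/

open Topology

lemma norm_projQ_le {d : ℕ} (V : Submodule ℝ (Euc d)) (v : Euc d) : ‖projQ V v‖ ≤ ‖v‖ :=
  Vᗮ.norm_starProjection_apply_le v

lemma planeNbhd_mono {d : ℕ} (a : Euc d) (V : Submodule ℝ (Euc d)) {η η' : ℝ} (h : η ≤ η') :
    planeNbhd a V η ⊆ planeNbhd a V η' :=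
  fun _ hx ↦ lt_of_lt_of_le hx h

lemma mem_planeNbhd_of_dist_lt {d : ℕ} {a x y : Euc d} {V : Submodule ℝ (Euc d)} {η ρ : ℝ}
    (hy : y ∈ planeNbhd a V η) (hxy : dist x y < ρ) : x ∈ planeNbhd a V (η + ρ) := by
  have hsplit : projQ V (x - a) = projQ V (y - a) + projQ V (x - y) := by
    rw [← map_add, sub_add_sub_cancel']
  calc ‖projQ V (x - a)‖ ≤ ‖projQ V (y - a)‖ + ‖projQ V (x - y)‖ := hsplit ▸ norm_add_le _ _
    _ ≤ ‖projQ V (y - a)‖ + ‖x - y‖ := by gcongr; exact norm_projQ_le V _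
    _ < η + ρ := add_lt_add hy (by rwa [← dist_eq_norm])

lemma ball_subset_ball_diff_planeNbhd {d : ℕ} {a x : Euc d} {V : Submodule ℝ (Euc d)}
    {r η ρ : ℝ} (hx : x ∈ ball a (r - ρ) \ planeNbhd a V (η + ρ)) :
    ball x ρ ⊆ ball a r \ planeNbhd a V η := by
  refine fun y hy ↦ ⟨ball_subset_ball' ?_ hy, fun hyV ↦ hx.2 ?_⟩
  · linarith [mem_ball.mp hx.1]
  · exact mem_planeNbhd_of_dist_lt hyV (by rwa [dist_comm, ← mem_ball])

theorem measure_eq_zero_of_balls_subset {X : Type*} [PseudoMetricSpace X] [MeasurableSpace X]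
    {m m' : Measure X} {E S T : Set X} {ρ : ℝ} {ε : ENNReal} (hm' : m' Eᶜ = 0)
    (hlow : ∀ x ∈ E, ε ≤ m (ball x ρ)) (hS : m S < ε) (hT : ∀ x ∈ T, ball x ρ ⊆ S) :
    m' T = 0 :=
  measure_mono_null (fun x hxT hxE ↦ (hS.trans_le ((hlow x hxE).trans
    (measure_mono (hT x hxT)))).false) hm'

theorem measure_ball_diff_planeNbhd_eq_zero {d : ℕ} {m m' : Measure (Euc d)} {E : Set (Euc d)}
    (hm' : m' Eᶜ = 0) {a : Euc d} (V : Submodule ℝ (Euc d)) {δ r : ℝ} {ε : ENNReal}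
    (hδ0 : 0 ≤ δ) (hδ1 : δ ≤ 1) (hr : 0 ≤ r) (hlow : ∀ x ∈ E, ε ≤ m (ball x (δ / 4 * r)))
    (hsmall : m (ball a r \ planeNbhd a V (δ / 2 * r)) < ε) :
    m' (ball a ((1 - δ / 4) * r) \ planeNbhd a V (δ * ((1 - δ / 4) * r))) = 0 := by
  refine measure_eq_zero_of_balls_subset hm' hlow hsmall fun x hx ↦
    ball_subset_ball_diff_planeNbhd ⟨?_, fun hxV ↦ hx.2 (planeNbhd_mono a V ?_ hxV)⟩
  · convert hx.1 using 2; ring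
  · nlinarith [mul_nonneg (mul_nonneg hδ0 (sub_nonneg.2 hδ1)) hr]

theorem measure_lt_of_div_rpow_lt {X : Type*} [MeasurableSpace X] {m : Measure X} {S : Set X}
    {C c r t : ℝ} (hC : 0 ≤ C) (hc : 0 ≤ c) (hr : 0 < r)
    (h : m S / ENNReal.ofReal (r ^ t) < ENNReal.ofReal (C * c ^ t)) :
    m S < ENNReal.ofReal (C * (c * r) ^ t) := by
  have hrt : ENNReal.ofReal (r ^ t) ≠ 0 := by simpa using Real.rpow_pos_of_pos hr t
  rw [ENNReal.div_lt_iff (Or.inl hrt) (Or.inl ENNReal.ofReal_ne_top),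
    ← ENNReal.ofReal_mul (by positivity)] at h
  rwa [Real.mul_rpow hc hr.le, ← mul_assoc]

lemma frequently_nhdsGT_zero_of_mul_left {k : ℝ} (hk : 0 < k) {p : ℝ → Prop}
    (h : ∃ᶠ r in 𝓝[>] 0, p (k * r)) : ∃ᶠ s in 𝓝[>] 0, p s :=
  (tendsto_iff_comap.mpr (comap_mulLeft_nhdsGT_zero hk).ge).frequently h

theorem statement10_general {d : ℕ}
    (E : Set (Euc d))
    (m m' : Measure (Euc d)) (t : ℝ)
    (C : ℝ) (hC : 0 < C) (r₀ : ℝ) (hr₀ : 0 < r₀)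
    (hlow : ∀ x ∈ E, ∀ r : ℝ, 0 < r → r < r₀ →
      ENNReal.ofReal (C * r ^ t) ≤ m (ball x r))
    (hm' : m' (Eᶜ) = 0)
    (a : Euc d)
    (V : Submodule ℝ (Euc d))
    (htang : IsWeakTangentPlane m t a V) :
    IsWeakTangentPlane m' t a V := by
  intro δ hδ0 hδ1
  have hsmall : ∃ᶠ r in 𝓝[>] 0, m (ball a r \ planeNbhd a V (δ / 2 * r)) /
      ENNReal.ofReal (r ^ t) < ENNReal.ofReal (C * (δ / 4) ^ t) := by
    refine frequently_lt_of_liminf_lt (by isBoundedDefault) ?_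
    rw [htang (δ / 2) (by positivity) (by linarith), ENNReal.ofReal_pos]
    positivity
  have hnull : ∃ᶠ r in 𝓝[>] 0, m' (ball a ((1 - δ / 4) * r) \
      planeNbhd a V (δ * ((1 - δ / 4) * r))) / ENNReal.ofReal (((1 - δ / 4) * r) ^ t) ≤ 0 := by
    refine (hsmall.and_eventually (Ioo_mem_nhdsGT hr₀)).mono fun r ⟨hr, hr0, hrr₀⟩ ↦ ?_
    have hlow_r x hx := hlow x hx (δ / 4 * r) (by positivity) (by nlinarith)
    rw [measure_ball_diff_planeNbhd_eq_zero hm' V hδ0.le hδ1.le hr0.le hlow_r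
      (measure_lt_of_div_rpow_lt hC.le (by positivity) hr0 hr), ENNReal.zero_div]
  exact le_antisymm (liminf_le_of_frequently_le'
    (frequently_nhdsGT_zero_of_mul_left (by linarith) hnull)) bot_le

/-- the notion of weak `(t,l)`-tangent plane is independent of
the choice of a lower-regular measure, given an upper bound for the second
measure. -/
theorem statement10 {d l : ℕ} (h0 : 0 < l) (hld : l < d)
    (E : Set (Euc d)) (hE : IsCompact E)
    (m m' : Measure (Euc d)) (t : ℝ) (ht : 0 < t)
    (C C' : ℝ) (hC : 0 < C) (hC' : 0 < C') (r₀ : ℝ) (hr₀ : 0 < r₀)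
    (hlow : ∀ x ∈ E, ∀ r : ℝ, 0 < r → r < r₀ →
      ENNReal.ofReal (C * r ^ t) ≤ m (ball x r))
    (hlow' : ∀ x ∈ E, ∀ r : ℝ, 0 < r → r < r₀ →
      ENNReal.ofReal (C * r ^ t) ≤ m' (ball x r))
    (hupp' : ∀ x ∈ E, ∀ r : ℝ, 0 < r → r < r₀ →
      m' (ball x r) ≤ ENNReal.ofReal (C' * r ^ t))
    (hm : m (Eᶜ) = 0) (hm' : m' (Eᶜ) = 0)
    (a : Euc d) (ha : a ∈ E)
    (V : Submodule ℝ (Euc d)) (hV : Module.finrank ℝ V = l)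
    (htang : IsWeakTangentPlane m t a V) :
    IsWeakTangentPlane m' t a V :=
  statement10_general E m m' t C hC r₀ hr₀ hlow hm' a V htang
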